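/- arXiv:1306.1973 — 5 statements merged into one kernel-verified Lean document; each statement's English description precedes it below -/
import Mathlib

section
/- If the product UV of two partial isometries U and V is a partial isometry, then the projections U*U and VV* commute. -/
open ContinuousLinearMap

variable {H : Type*} [NormedAddCommGroup H] [InnerProductSpace ℂ H] [CompleteSpace H]

/-- `E` is an orthogonal projection. -/
def IsOrthoProj (E : H →L[ℂ] H) : Prop := IsSelfAdjoint E ∧ E * E = E

/-- `A` is a partial isometry: `A*A` is an orthogonal projection. -/
def IsPartialIsom (A : H →L[ℂ] H) : Prop := IsOrthoProj (adjoint A * A)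

private lemma eq_zero_of_star_mul_self (A : H →L[ℂ] H) (h : star A * A = 0) : A = 0 :=
  (CStarRing.star_mul_self_eq_zero_iff A).mp h

/-- A partial isometry satisfies `A (A* A) = A`. -/
private lemma pi_id (A : H →L[ℂ] H) (hA : IsPartialIsom A) : A * (star A * A) = A := by
  have hsa : star (star A * A) = star A * A := by
    have := hA.1; rwa [← star_eq_adjoint] at this
  have hid : (star A * A) * (star A * A) = star A * A := by
    have := hA.2; rwa [← star_eq_adjoint] at this
  have h0 : star (A * (star A * A) - A) * (A * (star A * A) - A) = 0 := by
    have hstar : star (A * (star A * A) - A) = (star A * A) * star A - star A := by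
      rw [star_sub, star_mul, hsa]
    rw [hstar]
    have expand : ((star A * A) * star A - star A) * (A * (star A * A) - A)
        = ((star A * A) * (star A * A)) * (star A * A) - (star A * A) * (star A * A)
          - (star A * A) * (star A * A) + star A * A := by noncomm_ring
    rw [expand]
    simp only [hid]
    abel
  have := eq_zero_of_star_mul_self _ h0
  rwa [sub_eq_zero] at this

/-- Abstract algebraic core: two commuting-projection criterion. -/
private lemma core (p q : H →L[ℂ] H) (hsp : star p = p) (hp : p * p = p)
    (hsq : star q = q) (hq : q * q = q)
    (hqpq : (q * p * q) * (q * p * q) = q * p * q) : p * q = q * p := by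
  have h5 : q * p * q * p * q = q * p * q := by
    have e : (q * p * q) * (q * p * q) = q * p * (q * q) * p * q := by noncomm_ring
    rw [hq] at e
    exact e.symm.trans hqpq
  have hsqpq : star (q * p * q) = q * p * q := by
    rw [star_mul, star_mul, hsp, hsq]
    noncomm_ring
  have hT : star (p * q - q * p * q) * (p * q - q * p * q) = 0 := by
    have hstar : star (p * q - q * p * q) = q * p - q * p * q := by
      rw [star_sub, star_mul, hsp, hsq, hsqpq]
    rw [hstar]
    have expand : (q * p - q * p * q) * (p * q - q * p * q)
        = q * (p * p) * q - q * p * q * p * q - q * p * q * p * q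
          + (q * p * q) * (q * p * q) := by noncomm_ring
    rw [expand, hp, h5, hqpq]
    abel
  have hpq : p * q = q * p * q := by
    have := eq_zero_of_star_mul_self _ hT
    rwa [sub_eq_zero] at this
  calc p * q = star (p * q) := by rw [hpq, hsqpq]
    _ = star q * star p := by rw [star_mul]
    _ = q * p := by rw [hsp, hsq]

/-- If the product of two partial isometries is a partial isometry, then the initial
projection of `U` and the final projection of `V` commute (Halmos–Wallen, Lemma 2). -/
theorem commute_of_product_partial_isometry
    (U V : H →L[ℂ] H) (hU : IsPartialIsom U) (hV : IsPartialIsom V)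
    (hUV : IsPartialIsom (U * V)) :
    (adjoint U * U) * (V * adjoint V) = (V * adjoint V) * (adjoint U * U) := by
  simp only [← star_eq_adjoint]
  have hsp : star (star U * U) = star U * U := by
    have := hU.1; rwa [← star_eq_adjoint] at this
  have hp : (star U * U) * (star U * U) = star U * U := by
    have := hU.2; rwa [← star_eq_adjoint] at this
  have hVV : V * (star V * V) = V := pi_id V hV
  have hsq : star (V * star V) = V * star V := by rw [star_mul, star_star]
  have hq : (V * star V) * (V * star V) = V * star V := by
    have e : (V * star V) * (V * star V) = (V * (star V * V)) * star V := by noncomm_ring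
    rw [e, hVV]
  have hR : (star (U * V) * (U * V)) * (star (U * V) * (U * V)) = star (U * V) * (U * V) := by
    have := hUV.2; rwa [← star_eq_adjoint] at this
  have hR' : star (U * V) * (U * V) = star V * (star U * U) * V := by
    rw [star_mul]; noncomm_ring
  rw [hR'] at hR
  apply core _ _ hsp hp hsq hq
  -- show (q p q)(q p q) = q p q  with q = V V*, p = U* U
  have h1 : (V * star V) * (star U * U) * (V * star V)
      = V * (star V * (star U * U) * V) * star V := by noncomm_ring
  have h2 : (star V * (star U * U) * V) * (star V * V) * (star V * (star U * U) * V)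
      = (star V * (star U * U) * V) * (star V * (star U * U) * V) := by
    have e : (star V * (star U * U) * V) * (star V * V) * (star V * (star U * U) * V)
        = (star V * (star U * U) * (V * (star V * V))) * (star V * (star U * U) * V) := by
      noncomm_ring
    rw [e, hVV]
  have e2 : (V * (star V * (star U * U) * V) * star V) * (V * (star V * (star U * U) * V) * star V)
      = V * ((star V * (star U * U) * V) * (star V * V) * (star V * (star U * U) * V)) * star V := by
    noncomm_ring
  rw [h1, e2, h2, hR, ← h1]
end

section
/- In a self-adjoint semigroup of partial isometries, the set of orthogonal projections belonging to the semigroup is a commutative subsemigroup. -/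
open ContinuousLinearMap

variable {H : Type*} [NormedAddCommGroup H] [InnerProductSpace ℂ H] [CompleteSpace H]

/-- In a self-adjoint semigroup of partial isometries, the projections in the semigroup
form a commutative subsemigroup. -/
theorem projections_commute_in_selfadjoint_semigroup
    (S : Set (H →L[ℂ] H))
    (hmul : ∀ A ∈ S, ∀ B ∈ S, A * B ∈ S)
    (hstar : ∀ A ∈ S, adjoint A ∈ S)
    (hpi : ∀ A ∈ S, IsPartialIsom A)
    (P Q : H →L[ℂ] H) (hP : P ∈ S) (hQ : Q ∈ S)
    (hPproj : IsOrthoProj P) (hQproj : IsOrthoProj Q) :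
    P * Q = Q * P ∧ P * Q ∈ S ∧ IsOrthoProj (P * Q) := by
  obtain ⟨hPs, hP2⟩ := hPproj
  obtain ⟨hQs, hQ2⟩ := hQproj
  have hPQ : P * Q ∈ S := hmul P hP Q hQ
  obtain ⟨hEs, hE2⟩ := hpi _ hPQ
  rw [← ContinuousLinearMap.star_eq_adjoint] at hE2
  have hstarPQ : star (P * Q) = Q * P := by
    rw [star_mul, hPs.star_eq, hQs.star_eq]
  rw [hstarPQ] at hE2
  -- hE2 : Q * P * (P * Q) * (Q * P * (P * Q)) = Q * P * (P * Q)
  have hE : Q * P * Q * (Q * P * Q) = Q * P * Q := by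
    have h1 : Q * P * (P * Q) = Q * P * Q := by
      rw [show Q * P * (P * Q) = Q * (P * P) * Q by noncomm_ring, hP2]
    rw [h1] at hE2
    exact hE2
  -- key : QPQPQ = QPQ (in form needed)
  have key : P * Q = Q * P * Q := by
    have hz : star (P * Q - Q * P * Q) * (P * Q - Q * P * Q) = 0 := by
      have hsQPQ : star (Q * P * Q) = Q * P * Q := by
        simp only [star_mul, hPs.star_eq, hQs.star_eq, mul_assoc]
      rw [star_sub, hstarPQ, hsQPQ, sub_mul, mul_sub, mul_sub]
      have e1 : Q * P * (P * Q) = Q * P * Q := by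
        rw [show Q * P * (P * Q) = Q * (P * P) * Q by noncomm_ring, hP2]
      have e2 : Q * P * (Q * P * Q) = Q * P * Q := by
        calc Q * P * (Q * P * Q) = Q * P * Q * (P * Q) := by noncomm_ring
          _ = Q * P * (Q * Q) * (P * Q) := by rw [hQ2]
          _ = Q * P * Q * (Q * P * Q) := by noncomm_ring
          _ = Q * P * Q := hE
      have e3 : Q * P * Q * (P * Q) = Q * P * Q := by
        have : Q * P * Q * (P * Q) = Q * P * (Q * P * Q) := by noncomm_ring
        rw [this, e2]
      rw [e1, e2, e3, hE]; simp
    have := (CStarRing.star_mul_self_eq_zero_iff _).mp hz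
    exact sub_eq_zero.mp this
  have hcomm : P * Q = Q * P := by
    have : star (P * Q) = P * Q := by
      rw [key]
      simp only [star_mul, hPs.star_eq, hQs.star_eq, mul_assoc]
    rw [← this, hstarPQ]
  refine ⟨hcomm, hPQ, ?_, ?_⟩
  · rw [IsSelfAdjoint, hstarPQ, hcomm]
  · rw [key, hE]
end

section
/- If S is a self-adjoint semigroup of partial isometries, A ∈ S, and E ∈ S is an orthogonal projection, then F := A*EA is an orthogonal projection in S and satisfies EA = AF. -/
open ContinuousLinearMap

variable {H : Type*} [NormedAddCommGroup H] [InnerProductSpace ℂ H] [CompleteSpace H]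

theorem amul (A B : H →L[ℂ] H) : adjoint (A * B) = adjoint B * adjoint A :=
  adjoint_comp A B

open scoped InnerProductSpace in
theorem eq_zero_of_adjoint_mul_self (T : H →L[ℂ] H) (h : adjoint T * T = 0) : T = 0 := by
  ext v
  have h2 : (⟪T v, T v⟫_ℂ) = 0 := by
    rw [← adjoint_inner_left]
    rw [show adjoint T (T v) = (adjoint T * T) v from rfl, h]
    simp
  simpa using inner_self_eq_zero.mp h2

/-- A partial isometry satisfies `A (A*A) = A`. -/
theorem partial_isom_mul (A : H →L[ℂ] H) (h : IsPartialIsom A) :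
    A * (adjoint A * A) = A := by
  obtain ⟨hsa, hidem⟩ := h
  have h0 : adjoint A * (A * (adjoint A * A)) = adjoint A * A := by
    have := hidem
    simp only [mul_assoc] at this
    exact this
  have key : adjoint (A * (adjoint A * A) - A) * (A * (adjoint A * A) - A) = 0 := by
    have hadj : adjoint (A * (adjoint A * A) - A)
        = adjoint A * (A * adjoint A) - adjoint A := by
      simp only [map_sub, amul, adjoint_adjoint, mul_assoc]
    rw [hadj]
    simp only [sub_mul, mul_sub, mul_assoc, h0]
    simp only [sub_self, sub_zero]
  have hD := eq_zero_of_adjoint_mul_self _ key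
  exact sub_eq_zero.mp hD

/-- Two orthogonal projections commute as soon as their product is a partial isometry. -/
theorem proj_comm (E P : H →L[ℂ] H) (hE : IsOrthoProj E) (hP : IsOrthoProj P)
    (h : IsPartialIsom (E * P)) : E * P = P * E := by
  obtain ⟨hE1, hE2⟩ := hE
  obtain ⟨hP1, hP2⟩ := hP
  have hE' : adjoint E = E := hE1
  have hP' : adjoint P = P := hP1
  have hE2' : ∀ X : H →L[ℂ] H, E * (E * X) = E * X := fun X => by
    rw [← mul_assoc, hE2]
  have hP2' : ∀ X : H →L[ℂ] H, P * (P * X) = P * X := fun X => by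
    rw [← mul_assoc, hP2]
  obtain ⟨hq1, hq2⟩ := h
  rw [amul, hE', hP'] at hq2
  simp only [mul_assoc, hE2', hP2'] at hq2
  -- hq2 : P * (E * (P * (E * P))) = P * (E * P)
  have key : adjoint (E * P - P * (E * P)) * (E * P - P * (E * P)) = 0 := by
    have hadj : adjoint (E * P - P * (E * P)) = P * E - P * (E * P) := by
      simp only [map_sub, amul, hE', hP', mul_assoc]
    rw [hadj]
    simp only [sub_mul, mul_sub, mul_assoc, hE2', hP2', hq2]
    abel
  have hD := eq_zero_of_adjoint_mul_self _ key
  have h1 : E * P = P * (E * P) := sub_eq_zero.mp hD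
  -- take adjoints
  have h2 := congrArg adjoint h1
  simp only [map_sub, amul, hE', hP', mul_assoc] at h2
  -- h2 : P * E = P * (E * P)
  rw [h2, ← h1]

/-- If `S` is a self-adjoint semigroup of partial isometries, `A ∈ S` and `E ∈ S` is a
projection, then `F := A*EA` is a projection in `S` and `EA = AF`. -/
theorem intertwining_projection
    (S : Set (H →L[ℂ] H))
    (hmul : ∀ A ∈ S, ∀ B ∈ S, A * B ∈ S)
    (hstar : ∀ A ∈ S, adjoint A ∈ S)
    (hpi : ∀ A ∈ S, IsPartialIsom A)
    (A : H →L[ℂ] H) (hA : A ∈ S)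
    (E : H →L[ℂ] H) (hE : E ∈ S) (hEproj : IsOrthoProj E) :
    IsOrthoProj (adjoint A * E * A) ∧ (adjoint A * E * A) ∈ S ∧
      E * A = A * (adjoint A * E * A) := by
  obtain ⟨hE1, hE2⟩ := hEproj
  have hE' : adjoint E = E := hE1
  have hE2' : ∀ X : H →L[ℂ] H, E * (E * X) = E * X := fun X => by
    rw [← mul_assoc, hE2]
  have hPS : A * adjoint A ∈ S := hmul A hA _ (hstar A hA)
  have hPproj : IsOrthoProj (A * adjoint A) := by
    have := hpi _ (hstar A hA)
    rwa [IsPartialIsom, adjoint_adjoint] at this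
  have comm : E * (A * adjoint A) = A * adjoint A * E :=
    proj_comm E (A * adjoint A) ⟨hE1, hE2⟩ hPproj (hpi _ (hmul E hE _ hPS))
  have comm' : E * (A * adjoint A) = A * (adjoint A * E) := by
    rw [comm, mul_assoc]
  have swap : ∀ X : H →L[ℂ] H,
      E * (A * (adjoint A * X)) = A * (adjoint A * (E * X)) := fun X => by
    calc E * (A * (adjoint A * X)) = E * (A * adjoint A) * X := by
          simp only [mul_assoc]
      _ = A * (adjoint A * E) * X := by rw [comm']
      _ = A * (adjoint A * (E * X)) := by simp only [mul_assoc]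
  have hA3 : A * (adjoint A * A) = A := partial_isom_mul A (hpi A hA)
  have hA3' : adjoint A * (A * adjoint A) = adjoint A := by
    have := congrArg adjoint hA3
    simp only [amul, adjoint_adjoint, mul_assoc] at this
    exact this
  refine ⟨⟨?_, ?_⟩, hmul _ (hmul _ (hstar A hA) E hE) A hA, ?_⟩
  · show adjoint (adjoint A * E * A) = adjoint A * E * A
    simp only [amul, adjoint_adjoint, hE', mul_assoc]
  · show (adjoint A * E * A) * (adjoint A * E * A) = adjoint A * E * A
    simp only [mul_assoc]
    rw [swap (E * A), hE2' A,
      show adjoint A * (A * (adjoint A * (E * A))) =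
        adjoint A * (A * adjoint A) * (E * A) by simp only [mul_assoc], hA3']
  · rw [show A * (adjoint A * E * A) = A * (adjoint A * (E * A)) by
      simp only [mul_assoc], ← swap A, hA3]
end

section
/- An operator T is a power partial isometry if and only if the self-adjoint semigroup generated by T consists entirely of partial isometries. -/
open ContinuousLinearMap

variable {H : Type*} [NormedAddCommGroup H] [InnerProductSpace ℂ H] [CompleteSpace H]

/-!
Write `Eₐ = Tᵃ T*ᵃ` and `F_b = T*ᵇ Tᵇ`. In a C⋆-ring a product `x y` of partial isometries is
a partial isometry exactly when `x* x` commutes with `y y*`; applied to `Tᵐ Tⁿ = Tᵐ⁺ⁿ` this makes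
all the `Eₐ` and `F_b` commute. The products `Eₐ F_b` then form a commuting family of projections
that contains `T* T` and `T T*` and is stable under `p ↦ T p T*` and `p ↦ T* p T`, since
`T* Eₐ = Eₐ₋₁ T*` and `T F_b = F_b₋₁ T`. By induction on a word `w` in `T` and `T*`, its final
projection `w w*` lies in this family, so `T w` and `T* w` are again partial isometries.
-/

def IsPartialIsometry {A : Type*} [Mul A] [Star A] (x : A) : Prop := x * star x * x = x

namespace IsPartialIsometry

theorem one {A : Type*} [Monoid A] [StarMul A] : IsPartialIsometry (1 : A) := by
  simp [IsPartialIsometry]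

section Semigroup

variable {A : Type*} [Semigroup A] [StarMul A] {x y : A}

protected theorem star (hx : IsPartialIsometry x) : IsPartialIsometry (star x) := by
  simpa [IsPartialIsometry, mul_assoc] using congrArg star hx

theorem isStarProjection_star_mul_self (hx : IsPartialIsometry x) :
    IsStarProjection (star x * x) := by
  refine ⟨?_, .star_mul_self x⟩
  simpa only [IsIdempotentElem, mul_assoc] using congrArg (star x * ·) hx

theorem isStarProjection_mul_star_self (hx : IsPartialIsometry x) :
    IsStarProjection (x * star x) := by
  simpa using hx.star.isStarProjection_star_mul_self

theorem mul (hx : IsPartialIsometry x) (hy : IsPartialIsometry y)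
    (h : Commute (star x * x) (y * star y)) : IsPartialIsometry (x * y) := by
  unfold IsPartialIsometry at *
  calc x * y * star (x * y) * (x * y) = x * ((y * star y) * (star x * x)) * y := by
        simp only [star_mul, mul_assoc]
    _ = x * star x * x * (y * star y * y) := by rw [← h.eq]; simp only [mul_assoc]
    _ = x * y := by rw [hx, hy]

end Semigroup

end IsPartialIsometry

section CStarRing

variable {A : Type*} [NonUnitalNormedRing A] [StarRing A] [CStarRing A]

theorem IsStarProjection.commute_of_isIdempotentElem_mul {p q : A} (hp : IsStarProjection p)
    (hq : IsStarProjection q) (hpq : IsIdempotentElem (p * q)) : Commute p q := by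
  have hpp : ∀ z, p * (p * z) = p * z := fun z => by rw [← mul_assoc, hp.isIdempotentElem.eq]
  have hqq : ∀ z, q * (q * z) = q * z := fun z => by rw [← mul_assoc, hq.isIdempotentElem.eq]
  have hpqpq : ∀ z, p * (q * (p * (q * z))) = p * (q * z) := fun z => by
    simpa only [mul_assoc] using congrArg (· * z) hpq.eq
  have hd : (p * q - p * q * p) * star (p * q - p * q * p) = 0 := by
    simp only [star_sub, star_mul, hp.isSelfAdjoint.star_eq, hq.isSelfAdjoint.star_eq, mul_sub,
      sub_mul, mul_assoc, hpp, hqq, hpqpq, sub_self]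
  have hpq_eq : p * q = p * q * p :=
    sub_eq_zero.mp ((CStarRing.mul_star_self_eq_zero_iff _).mp hd)
  have hqp_eq := congrArg star hpq_eq
  simp only [star_mul, hp.isSelfAdjoint.star_eq, hq.isSelfAdjoint.star_eq, mul_assoc] at hqp_eq
  rw [Commute, SemiconjBy, hpq_eq, hqp_eq, mul_assoc]

theorem isPartialIsometry_iff_isStarProjection_star_mul_self {x : A} :
    IsPartialIsometry x ↔ IsStarProjection (star x * x) := by
  refine ⟨IsPartialIsometry.isStarProjection_star_mul_self, fun hp => ?_⟩
  have hp' : star x * (x * (star x * x)) = star x * x := by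
    simpa only [mul_assoc] using hp.isIdempotentElem.eq
  have hd : star (x * star x * x - x) * (x * star x * x - x) = 0 := by
    simp only [star_sub, star_mul, star_star, mul_sub, sub_mul, mul_assoc, hp', sub_self]
  exact sub_eq_zero.mp ((CStarRing.star_mul_self_eq_zero_iff _).mp hd)

theorem IsPartialIsometry.commute_of_mul {x y : A} (hx : IsPartialIsometry x)
    (hy : IsPartialIsometry y) (hxy : IsPartialIsometry (x * y)) :
    Commute (star x * x) (y * star y) := by
  refine hx.isStarProjection_star_mul_self.commute_of_isIdempotentElem_mul
    hy.isStarProjection_mul_star_self ?_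
  calc star x * x * (y * star y) * (star x * x * (y * star y))
      = star x * (x * y * star (x * y) * (x * y)) * star y := by
        simp only [star_mul, mul_assoc]
    _ = star x * x * (y * star y) := by rw [hxy]; simp only [mul_assoc]

end CStarRing

def IsPowerPartialIsometry {A : Type*} [Monoid A] [StarMul A] (T : A) : Prop :=
  ∀ n : ℕ, IsPartialIsometry (T ^ n)

section Projections

variable {A : Type*} [Monoid A] [StarMul A] (T : A)

def initialProj (n : ℕ) : A := star (T ^ n) * T ^ n

def finalProj (n : ℕ) : A := T ^ n * star (T ^ n)

def finalInitialProjs : Set A := {p | ∃ a b, finalProj T a * initialProj T b = p}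

@[simp]
theorem initialProj_zero : initialProj T 0 = 1 := by simp [initialProj]

@[simp]
theorem finalProj_zero : finalProj T 0 = 1 := by simp [finalProj]

@[simp]
theorem initialProj_star (n : ℕ) : initialProj (star T) n = finalProj T n := by
  simp [initialProj, finalProj, star_pow]

@[simp]
theorem finalProj_star (n : ℕ) : finalProj (star T) n = initialProj T n := by
  simp [initialProj, finalProj, star_pow]

theorem initialProj_succ (n : ℕ) : initialProj T (n + 1) = star T * initialProj T n * T := by
  simp only [initialProj, pow_succ, star_mul, mul_assoc]

theorem initialProj_one : initialProj T 1 = star T * T := by simp [initialProj]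

theorem finalProj_one : finalProj T 1 = T * star T := by simp [finalProj]

end Projections

namespace IsPowerPartialIsometry

section Monoid

variable {A : Type*} [Monoid A] [StarMul A] {T : A}

protected theorem star (hT : IsPowerPartialIsometry T) : IsPowerPartialIsometry (star T) :=
  fun n => by simpa [star_pow] using (hT n).star

theorem isStarProjection_initialProj (hT : IsPowerPartialIsometry T) (n : ℕ) :
    IsStarProjection (initialProj T n) :=
  (hT n).isStarProjection_star_mul_self

theorem initialProj_mul_initialProj_of_le (hT : IsPowerPartialIsometry T) {m n : ℕ}
    (h : m ≤ n) : initialProj T n * initialProj T m = initialProj T n := by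
  obtain ⟨k, rfl⟩ := exists_add_of_le h
  rw [initialProj, initialProj, add_comm, pow_add]
  simp only [mul_assoc]
  rw [show T ^ m * (star (T ^ m) * T ^ m) = T ^ m by rw [← mul_assoc]; exact hT m]

end Monoid

variable {A : Type*} [NormedRing A] [StarRing A] [CStarRing A] {T : A}

theorem commute_initialProj_initialProj (hT : IsPowerPartialIsometry T) (m n : ℕ) :
    Commute (initialProj T m) (initialProj T n) := by
  wlog h : m ≤ n generalizing m n
  · exact (this n m (le_of_not_ge h)).symm
  refine ((hT.isStarProjection_initialProj n).commute_of_isIdempotentElem_mul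
    (hT.isStarProjection_initialProj m) ?_).symm
  rw [hT.initialProj_mul_initialProj_of_le h]
  exact (hT.isStarProjection_initialProj n).isIdempotentElem

theorem commute_initialProj_finalProj (hT : IsPowerPartialIsometry T) (m n : ℕ) :
    Commute (initialProj T m) (finalProj T n) :=
  (hT m).commute_of_mul (hT n) (by rw [← pow_add]; exact hT _)

theorem mul_initialProj (hT : IsPowerPartialIsometry T) (b : ℕ) :
    T * initialProj T b = initialProj T (b - 1) * T := by
  cases b with
  | zero => simp
  | succ b =>
    calc T * initialProj T (b + 1) = finalProj T 1 * initialProj T b * T := by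
          rw [initialProj_succ, finalProj_one]; simp only [mul_assoc]
      _ = initialProj T b * (T * star T * T) := by
          rw [← (hT.commute_initialProj_finalProj b 1).eq, finalProj_one]; simp only [mul_assoc]
      _ = initialProj T (b + 1 - 1) * T := by
          rw [show T * star T * T = T by simpa [IsPartialIsometry] using hT 1, Nat.add_sub_cancel]

theorem star_mul_finalProj (hT : IsPowerPartialIsometry T) (a : ℕ) :
    star T * finalProj T a = finalProj T (a - 1) * star T := by
  simpa using hT.star.mul_initialProj a

theorem finalInitialProjs_star (hT : IsPowerPartialIsometry T) :
    finalInitialProjs (star T) = finalInitialProjs T := by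
  ext p
  constructor <;> rintro ⟨a, b, rfl⟩ <;> refine ⟨b, a, ?_⟩
  · simpa using (hT.commute_initialProj_finalProj a b).eq.symm
  · simpa using (hT.commute_initialProj_finalProj b a).eq

theorem star_mul_mul_mem (hT : IsPowerPartialIsometry T) {p : A}
    (hp : p ∈ finalInitialProjs T) : star T * p * T ∈ finalInitialProjs T := by
  obtain ⟨a, b, rfl⟩ := hp
  refine ⟨a - 1, b + 1, ?_⟩
  rw [initialProj_succ]
  simp only [← mul_assoc]
  rw [hT.star_mul_finalProj]

theorem mul_mul_star_mem (hT : IsPowerPartialIsometry T) {p : A}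
    (hp : p ∈ finalInitialProjs T) : T * p * star T ∈ finalInitialProjs T := by
  simpa [hT.finalInitialProjs_star] using hT.star.star_mul_mul_mem (hT.finalInitialProjs_star ▸ hp)

theorem commute_star_mul_self_of_mem (hT : IsPowerPartialIsometry T) {p : A}
    (hp : p ∈ finalInitialProjs T) : Commute (star T * T) p := by
  obtain ⟨a, b, rfl⟩ := hp
  rw [← initialProj_one]
  exact (hT.commute_initialProj_finalProj 1 a).mul_right (hT.commute_initialProj_initialProj 1 b)

theorem mul_isPartialIsometry (hT : IsPowerPartialIsometry T) {w : A}
    (hw : IsPartialIsometry w) (hww : w * star w ∈ finalInitialProjs T) :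
    IsPartialIsometry (T * w) ∧ T * w * star (T * w) ∈ finalInitialProjs T := by
  have hT₁ : IsPartialIsometry T := by simpa using hT 1
  refine ⟨hT₁.mul hw (hT.commute_star_mul_self_of_mem hww), ?_⟩
  simpa only [star_mul, mul_assoc] using hT.mul_mul_star_mem hww

theorem isPartialIsometry_list_prod (hT : IsPowerPartialIsometry T) (l : List A)
    (hl : ∀ x ∈ l, x = T ∨ x = star T) :
    IsPartialIsometry l.prod ∧ l.prod * star l.prod ∈ finalInitialProjs T := by
  induction l with
  | nil => exact ⟨IsPartialIsometry.one, 0, 0, by simp⟩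
  | cons x l ih =>
    obtain ⟨hw, hww⟩ := ih fun y hy => hl y (List.mem_cons_of_mem x hy)
    rw [List.prod_cons]
    rcases hl x List.mem_cons_self with rfl | rfl
    · exact hT.mul_isPartialIsometry hw hww
    · rw [← hT.finalInitialProjs_star] at hww ⊢
      exact hT.star.mul_isPartialIsometry hw hww

end IsPowerPartialIsometry

theorem isPartialIsom_iff_isPartialIsometry (T : H →L[ℂ] H) :
    IsPartialIsom T ↔ IsPartialIsometry T := by
  rw [isPartialIsometry_iff_isStarProjection_star_mul_self, isStarProjection_iff, IsPartialIsom,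
    IsOrthoProj, star_eq_adjoint, and_comm, IsIdempotentElem]

/-- `T` is a power partial isometry iff the self-adjoint semigroup generated by `T`
(the set of all nonempty words in `T` and `T*`) consists of partial isometries. -/
theorem power_partial_isometry_iff_selfadjoint_semigroup
    (T : H →L[ℂ] H) :
    (∀ n : ℕ, 1 ≤ n → IsPartialIsom (T ^ n)) ↔
      (∀ l : List (H →L[ℂ] H), l ≠ [] → (∀ A ∈ l, A = T ∨ A = adjoint T) →
        IsPartialIsom l.prod) := by
  simp only [isPartialIsom_iff_isPartialIsometry, ← star_eq_adjoint]
  constructor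
  · intro hpow l _ hl
    have hT : IsPowerPartialIsometry T := fun n => by
      rcases n with _ | n
      · simpa using IsPartialIsometry.one
      · exact hpow (n + 1) n.succ_pos
    exact (hT.isPartialIsometry_list_prod l hl).1
  · intro hwords n hn
    simpa using hwords (List.replicate n T)
      (by simpa [List.replicate_eq_nil_iff] using Nat.one_le_iff_ne_zero.mp hn)
      fun A hA => .inl (List.eq_of_mem_replicate hA)
end

section
/- Let S be a self-adjoint semigroup of partial isometries containing the identity, let A1, ..., An ∈ S, and let E1, ..., E_{n-1} be orthogonal projections each commuting with every projection of the form T*T and TT* for T in the semigroup generated by S and the E_i, and satisfying: for each word W in these generators and each projection E in the commutative Boolean algebra generated, there is a projection F in that algebra with EW = WF. Then every product A1 E1 A2 E2 ⋯ E_{n-1} A_n is a partial isometry. -/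
/-! Pushing every projection of a word to the right with `E A = A F` writes the word as `A E`
with `A ∈ S` and `E ∈ B`. Since `E` commutes with the projection `A⋆ A`, the initial projection
`(A E)⋆ (A E) = A⋆ A E` is a product of projections in `B`; and with `A E = F A` the final
projection `(A E) (A E)⋆ = F A A⋆` is one as well. -/

open ContinuousLinearMap

variable {H : Type*} [NormedAddCommGroup H] [InnerProductSpace ℂ H] [CompleteSpace H]

open scoped Pointwise

section

variable {M : Type*} [Monoid M]

theorem List.prod_mem_mul_of_intertwine {S B : Set M} (hmulS : ∀ A ∈ S, ∀ A' ∈ S, A * A' ∈ S)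
    (honeS : 1 ∈ S) (hmulB : ∀ E ∈ B, ∀ F ∈ B, E * F ∈ B) (honeB : 1 ∈ B)
    (hintertwine : ∀ A ∈ S, ∀ E ∈ B, ∃ F ∈ B, E * A = A * F) :
    ∀ l : List M, (∀ X ∈ l, X ∈ S ∪ B) → l.prod ∈ S * B
  | [], _ => Set.mem_mul.2 ⟨1, honeS, 1, honeB, by simp⟩
  | X :: l, hl => by
    obtain ⟨A, hA, E, hE, hAE⟩ := Set.mem_mul.1 <| prod_mem_mul_of_intertwine hmulS honeS hmulB
      honeB hintertwine l fun Y hY => hl Y (List.mem_cons_of_mem X hY)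
    rw [List.prod_cons, ← hAE, Set.mem_mul]
    rcases hl X List.mem_cons_self with hXS | hXB
    · exact ⟨X * A, hmulS X hXS A hA, E, hE, mul_assoc X A E⟩
    · obtain ⟨F, hF, hXA⟩ := hintertwine A hA X hXB
      exact ⟨A, hA, F * E, hmulB F hF E hE, by rw [← mul_assoc, ← hXA, mul_assoc]⟩

variable [StarMul M] {A E F : M}

theorem IsStarProjection.star_mul_self_of_commute (hE : IsStarProjection E)
    (hcomm : Commute E (star A * A)) : star (A * E) * (A * E) = star A * A * E :=
  calc star (A * E) * (A * E) = E * (star A * A) * E := by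
        rw [star_mul, hE.isSelfAdjoint.star_eq]; simp only [mul_assoc]
    _ = star A * A * E := by rw [hcomm.eq, mul_assoc, hE.isIdempotentElem.eq]

theorem IsStarProjection.mul_star_self_of_mul_eq (hE : IsStarProjection E)
    (hAE : A * E = F * A) : A * E * star (A * E) = F * (A * star A) :=
  calc A * E * star (A * E) = A * (E * E) * star A := by
        rw [star_mul, hE.isSelfAdjoint.star_eq]; simp only [mul_assoc]
    _ = F * (A * star A) := by rw [hE.isIdempotentElem.eq, hAE, mul_assoc]

end

theorem enriched_semigroup_partial_isometries_general
    (S B : Set (H →L[ℂ] H))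
    (hmulS : ∀ A ∈ S, ∀ A' ∈ S, A * A' ∈ S)
    (honeS : (1 : H →L[ℂ] H) ∈ S)
    (hBproj : ∀ E ∈ B, IsOrthoProj E)
    (hBmul : ∀ E ∈ B, ∀ F ∈ B, E * F ∈ B)
    (hBcomm : ∀ E ∈ B, ∀ F ∈ B, E * F = F * E)
    (hBinit : ∀ T ∈ S, adjoint T * T ∈ B)
    (hBfin : ∀ T ∈ S, T * adjoint T ∈ B)
    (hintertwine : ∀ A ∈ S, ∀ E ∈ B, ∃ F ∈ B, E * A = A * F)
    (hintertwine' : ∀ A ∈ S, ∀ E ∈ B, ∃ F ∈ B, A * E = F * A) :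
    ∀ l : List (H →L[ℂ] H), l ≠ [] → (∀ X ∈ l, X ∈ S ∪ B) →
      IsPartialIsom l.prod ∧ adjoint l.prod * l.prod ∈ B ∧
        l.prod * adjoint l.prod ∈ B := by
  intro l _ hl
  have honeB : (1 : H →L[ℂ] H) ∈ B := by simpa [← star_eq_adjoint] using hBinit 1 honeS
  obtain ⟨A, hA, E, hE, hprod⟩ := Set.mem_mul.1 <|
    l.prod_mem_mul_of_intertwine hmulS honeS hBmul honeB hintertwine hl
  rw [← hprod]
  obtain ⟨F, hF, hAE⟩ := hintertwine' A hA E hE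
  have hEproj : IsStarProjection E := ⟨(hBproj E hE).2, (hBproj E hE).1⟩
  have hinit : adjoint (A * E) * (A * E) ∈ B := by
    rw [← star_eq_adjoint, hEproj.star_mul_self_of_commute (hBcomm E hE _ (hBinit A hA))]
    exact hBmul _ (hBinit A hA) E hE
  have hfin : A * E * adjoint (A * E) ∈ B := by
    rw [← star_eq_adjoint, hEproj.mul_star_self_of_mul_eq hAE]
    exact hBmul F hF _ (hBfin A hA)
  exact ⟨hBproj _ hinit, hinit, hfin⟩

/-- Let `S` be a self-adjoint semigroup of partial isometries containing the identity,
and let `B` be a commutative, multiplicatively closed family of orthogonal projections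
containing all `T*T` and `TT*` for `T ∈ S`, with the intertwining property: for all
`A ∈ S` and `E ∈ B` there exist `F, F' ∈ B` with `EA = AF` and `AE = F'A`. Then the
semigroup generated by `S ∪ B` consists of partial isometries `T` with `T*T ∈ B` and
`TT* ∈ B`. -/
theorem enriched_semigroup_partial_isometries
    (S B : Set (H →L[ℂ] H))
    (hmulS : ∀ A ∈ S, ∀ A' ∈ S, A * A' ∈ S)
    (hstarS : ∀ A ∈ S, adjoint A ∈ S)
    (hpiS : ∀ A ∈ S, IsPartialIsom A)
    (honeS : (1 : H →L[ℂ] H) ∈ S)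
    (hBproj : ∀ E ∈ B, IsOrthoProj E)
    (hBmul : ∀ E ∈ B, ∀ F ∈ B, E * F ∈ B)
    (hBcomm : ∀ E ∈ B, ∀ F ∈ B, E * F = F * E)
    (hBinit : ∀ T ∈ S, adjoint T * T ∈ B)
    (hBfin : ∀ T ∈ S, T * adjoint T ∈ B)
    (hintertwine : ∀ A ∈ S, ∀ E ∈ B, ∃ F ∈ B, E * A = A * F)
    (hintertwine' : ∀ A ∈ S, ∀ E ∈ B, ∃ F ∈ B, A * E = F * A) :
    ∀ l : List (H →L[ℂ] H), l ≠ [] → (∀ X ∈ l, X ∈ S ∪ B) →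
      IsPartialIsom l.prod ∧ adjoint l.prod * l.prod ∈ B ∧
        l.prod * adjoint l.prod ∈ B :=
  enriched_semigroup_partial_isometries_general S B hmulS honeS hBproj hBmul hBcomm hBinit hBfin
    hintertwine hintertwine'
end
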